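/- Let L be a regular-epi localization functor on XMod and let 1 → N →(κ) T →(α) Q → 1 be an L-flat short exact sequence, with fiberwise localization the quotient sequence 1 → LN → T/κ(ker ℓ^N) → Q → 1 obtained by quotienting T by the normal subcrossed module κ(ker ℓ^N). Then for any morphism g : Q' → Q, the pullback along g of this fiberwise localization, 1 → LN → (T/κ(ker ℓ^N)) ×_Q Q' → Q' → 1, together with the morphism T ×_Q Q' → (T/κ(ker ℓ^N)) ×_Q Q' induced by the quotient map, is a fiberwise localization of the pullback sequence 1 → N → T ×_Q Q' → Q' → 1. -/

import Mathlib

set_option linter.unusedVariables false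

/-- A crossed module of groups `(M, G, d)` with `G` acting on `M`. -/
structure XMod : Type 1 where
  M : Type
  G : Type
  [grpM : Group M]
  [grpG : Group G]
  act : G →* MulAut M
  d : M →* G
  act_d : ∀ (b : G) (t : M), d (act b t) = b * d t * b⁻¹
  peiffer : ∀ (t s : M), act (d t) s = t * s * t⁻¹

attribute [instance] XMod.grpM XMod.grpG

/-- A morphism of crossed modules. -/
structure XModHom (N T : XMod) where
  f1 : N.M →* T.M
  f2 : N.G →* T.G
  comm_d : ∀ n, T.d (f1 n) = f2 (N.d n)
  equiv : ∀ (b : N.G) (n : N.M), f1 (N.act b n) = T.act (f2 b) (f1 n)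

namespace XModHom

theorem ext {N T : XMod} {f g : XModHom N T} (h1 : f.f1 = g.f1) (h2 : f.f2 = g.f2) :
    f = g := by
  cases f; cases g; cases h1; cases h2; rfl

/-- The identity morphism. -/
def id (T : XMod) : XModHom T T :=
  ⟨MonoidHom.id _, MonoidHom.id _, fun _ => rfl, fun _ _ => rfl⟩

/-- Composition of morphisms of crossed modules. -/
def comp {A B C : XMod} (g : XModHom B C) (f : XModHom A B) : XModHom A C where
  f1 := g.f1.comp f.f1
  f2 := g.f2.comp f.f2
  comm_d := by intro n; simp [MonoidHom.comp_apply, g.comm_d, f.comm_d]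
  equiv := by intro b n; simp [MonoidHom.comp_apply, f.equiv, g.equiv]

/-- The trivial morphism of crossed modules. -/
def triv (A B : XMod) : XModHom A B where
  f1 := 1
  f2 := 1
  comm_d := by intro n; simp
  equiv := by intro b n; simp

/-- A morphism of crossed modules is an isomorphism if it has a two-sided inverse. -/
def IsIso {A B : XMod} (f : XModHom A B) : Prop :=
  ∃ g : XModHom B A, comp g f = id A ∧ comp f g = id B

/-- Regular epimorphisms of crossed modules are exactly the componentwise
surjective morphisms. -/
def RegEpi {A B : XMod} (f : XModHom A B) : Prop :=
  Function.Surjective f.f1 ∧ Function.Surjective f.f2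

/-- `κ` is a kernel of `α` (in the categorical sense). -/
def IsKernelOf {N T Q : XMod} (κ : XModHom N T) (α : XModHom T Q) : Prop :=
  comp α κ = triv N Q ∧
    ∀ (X : XMod) (u : XModHom X T), comp α u = triv X Q →
      ∃! v : XModHom X N, comp κ v = u

end XModHom

/-- `1 → N → T → Q → 1` is a short exact sequence of crossed modules. -/
def ShortExact {N T Q : XMod} (κ : XModHom N T) (α : XModHom T Q) : Prop :=
  XModHom.IsKernelOf κ α ∧ XModHom.RegEpi α
/-- A localization functor (coaugmented idempotent functor) on `XMod`. -/
structure LocalizationFunctor where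
  obj : XMod → XMod
  map : ∀ {A B : XMod}, XModHom A B → XModHom (obj A) (obj B)
  map_id : ∀ A : XMod, map (XModHom.id A) = XModHom.id (obj A)
  map_comp : ∀ {A B C : XMod} (f : XModHom A B) (g : XModHom B C),
    map (XModHom.comp g f) = XModHom.comp (map g) (map f)
  ell : ∀ A : XMod, XModHom A (obj A)
  natural : ∀ {A B : XMod} (f : XModHom A B),
    XModHom.comp (ell B) f = XModHom.comp (map f) (ell A)
  iso_ell_obj : ∀ A : XMod, XModHom.IsIso (ell (obj A))
  iso_map_ell : ∀ A : XMod, XModHom.IsIso (map (ell A))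

namespace LocalizationFunctor

/-- A crossed module is `L`-local if its coaugmentation is an isomorphism. -/
def IsLocal (L : LocalizationFunctor) (X : XMod) : Prop :=
  XModHom.IsIso (L.ell X)

/-- `L` is a regular-epi localization if every coaugmentation morphism is a
regular epimorphism. -/
def RegEpiLoc (L : LocalizationFunctor) : Prop :=
  ∀ X : XMod, XModHom.RegEpi (L.ell X)

/-- A short exact sequence is `L`-flat if applying `L` yields a short exact sequence. -/
def LFlat (L : LocalizationFunctor) {N T Q : XMod} (κ : XModHom N T) (α : XModHom T Q) : Prop :=
  ShortExact (L.map κ) (L.map α)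

end LocalizationFunctor
section Pullback

variable {T Q Q' : XMod} (α : XModHom T Q) (g : XModHom Q' Q)

/-- Level-1 part of the pullback `T ×_Q Q'`, computed componentwise. -/
def pbM : Subgroup (T.M × Q'.M) where
  carrier := {p | α.f1 p.1 = g.f1 p.2}
  one_mem' := by simp
  mul_mem' := by
    intro a b ha hb
    simp only [Set.mem_setOf_eq, Prod.fst_mul, Prod.snd_mul, map_mul] at *
    rw [ha, hb]
  inv_mem' := by
    intro a ha
    simp only [Set.mem_setOf_eq, Prod.fst_inv, Prod.snd_inv, map_inv] at *
    rw [ha]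

/-- Level-2 part of the pullback `T ×_Q Q'`, computed componentwise. -/
def pbG : Subgroup (T.G × Q'.G) where
  carrier := {p | α.f2 p.1 = g.f2 p.2}
  one_mem' := by simp
  mul_mem' := by
    intro a b ha hb
    simp only [Set.mem_setOf_eq, Prod.fst_mul, Prod.snd_mul, map_mul] at *
    rw [ha, hb]
  inv_mem' := by
    intro a ha
    simp only [Set.mem_setOf_eq, Prod.fst_inv, Prod.snd_inv, map_inv] at *
    rw [ha]

theorem mem_pbM_iff (p : T.M × Q'.M) : p ∈ pbM α g ↔ α.f1 p.1 = g.f1 p.2 := Iff.rfl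

theorem mem_pbG_iff (p : T.G × Q'.G) : p ∈ pbG α g ↔ α.f2 p.1 = g.f2 p.2 := Iff.rfl

theorem pb_act_mem {b : T.G × Q'.G} (hb : b ∈ pbG α g) {p : T.M × Q'.M}
    (hp : p ∈ pbM α g) : (T.act b.1 p.1, Q'.act b.2 p.2) ∈ pbM α g := by
  have hb' : α.f2 b.1 = g.f2 b.2 := hb
  have hp' : α.f1 p.1 = g.f1 p.2 := hp
  show α.f1 (T.act b.1 p.1) = g.f1 (Q'.act b.2 p.2)
  rw [α.equiv, g.equiv, hb', hp']

theorem XMod.act_inv_act (X : XMod) (b : X.G) (t : X.M) :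
    X.act b⁻¹ (X.act b t) = t := by
  rw [← MulAut.mul_apply, ← map_mul, inv_mul_cancel, map_one, MulAut.one_apply]

theorem XMod.act_act_inv (X : XMod) (b : X.G) (t : X.M) :
    X.act b (X.act b⁻¹ t) = t := by
  rw [← MulAut.mul_apply, ← map_mul, mul_inv_cancel, map_one, MulAut.one_apply]

/-- The action of an element of the pullback on the level-1 part, as a group
automorphism. -/
def pbActEquiv (b : ↥(pbG α g)) : ↥(pbM α g) ≃* ↥(pbM α g) where
  toFun p := ⟨(T.act b.1.1 p.1.1, Q'.act b.1.2 p.1.2), pb_act_mem α g b.2 p.2⟩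
  invFun p := ⟨(T.act b.1.1⁻¹ p.1.1, Q'.act b.1.2⁻¹ p.1.2),
    pb_act_mem α g ((pbG α g).inv_mem b.2) p.2⟩
  left_inv p := by
    apply Subtype.ext
    exact Prod.ext (T.act_inv_act _ _) (Q'.act_inv_act _ _)
  right_inv p := by
    apply Subtype.ext
    exact Prod.ext (T.act_act_inv _ _) (Q'.act_act_inv _ _)
  map_mul' p q := by
    apply Subtype.ext
    exact Prod.ext (map_mul _ _ _) (map_mul _ _ _)

/-- The pullback `T ×_Q Q'` of `α : T → Q` along `g : Q' → Q`, computed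
componentwise. -/
def pbXMod : XMod where
  M := ↥(pbM α g)
  G := ↥(pbG α g)
  act :=
    { toFun := pbActEquiv α g
      map_one' := by
        apply MulEquiv.ext
        intro p
        apply Subtype.ext
        apply Prod.ext
        · show T.act (1 : ↥(pbG α g)).1.1 p.1.1 = p.1.1
          simp
        · show Q'.act (1 : ↥(pbG α g)).1.2 p.1.2 = p.1.2
          simp
      map_mul' := by
        intro b c
        apply MulEquiv.ext
        intro p
        apply Subtype.ext
        apply Prod.ext
        · show T.act (b * c).1.1 p.1.1 = T.act b.1.1 (T.act c.1.1 p.1.1)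
          simp [map_mul]
        · show Q'.act (b * c).1.2 p.1.2 = Q'.act b.1.2 (Q'.act c.1.2 p.1.2)
          simp [map_mul] }
  d :=
    { toFun := fun p => ⟨(T.d p.1.1, Q'.d p.1.2), by
        have hp : α.f1 p.1.1 = g.f1 p.1.2 := p.2
        show α.f2 (T.d p.1.1) = g.f2 (Q'.d p.1.2)
        rw [← α.comm_d, ← g.comm_d, hp]⟩
      map_one' := by
        apply Subtype.ext
        apply Prod.ext <;> simp
      map_mul' := by
        intro p q
        apply Subtype.ext
        apply Prod.ext <;> simp }
  act_d := by
    intro b p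
    apply Subtype.ext
    apply Prod.ext
    · exact T.act_d _ _
    · exact Q'.act_d _ _
  peiffer := by
    intro p q
    apply Subtype.ext
    apply Prod.ext
    · exact T.peiffer _ _
    · exact Q'.peiffer _ _

/-- First projection of the pullback. -/
def pbFst : XModHom (pbXMod α g) T where
  f1 := (MonoidHom.fst T.M Q'.M).comp (pbM α g).subtype
  f2 := (MonoidHom.fst T.G Q'.G).comp (pbG α g).subtype
  comm_d := fun _ => rfl
  equiv := fun _ _ => rfl

/-- Second projection of the pullback. -/
def pbSnd : XModHom (pbXMod α g) Q' where
  f1 := (MonoidHom.snd T.M Q'.M).comp (pbM α g).subtype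
  f2 := (MonoidHom.snd T.G Q'.G).comp (pbG α g).subtype
  comm_d := fun _ => rfl
  equiv := fun _ _ => rfl

end Pullback
section PullbackMaps

variable {N T Q Q' : XMod}

/-- The induced morphism from the kernel `N` into the pullback `T ×_Q Q'`. -/
def pbIn (κ : XModHom N T) (α : XModHom T Q) (g : XModHom Q' Q)
    (h : XModHom.comp α κ = XModHom.triv N Q) : XModHom N (pbXMod α g) where
  f1 :=
    { toFun := fun n => ⟨(κ.f1 n, 1), by
        show α.f1 (κ.f1 n) = g.f1 1
        have := congrArg XModHom.f1 h
        have h' : α.f1 (κ.f1 n) = 1 := DFunLike.congr_fun this n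
        rw [h', map_one]⟩
      map_one' := by
        apply Subtype.ext
        apply Prod.ext <;> (try simp) <;> rfl
      map_mul' := by
        intro a b
        apply Subtype.ext
        show (κ.f1 (a * b), (1 : Q'.M)) = (κ.f1 a, (1 : Q'.M)) * (κ.f1 b, (1 : Q'.M))
        simp [Prod.ext_iff, map_mul] }
  f2 :=
    { toFun := fun n => ⟨(κ.f2 n, 1), by
        show α.f2 (κ.f2 n) = g.f2 1
        have := congrArg XModHom.f2 h
        have h' : α.f2 (κ.f2 n) = 1 := DFunLike.congr_fun this n
        rw [h', map_one]⟩
      map_one' := by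
        apply Subtype.ext
        apply Prod.ext <;> (try simp) <;> rfl
      map_mul' := by
        intro a b
        apply Subtype.ext
        show (κ.f2 (a * b), (1 : Q'.G)) = (κ.f2 a, (1 : Q'.G)) * (κ.f2 b, (1 : Q'.G))
        simp [Prod.ext_iff, map_mul] }
  comm_d := by
    intro n
    apply Subtype.ext
    apply Prod.ext
    · exact κ.comm_d n
    · show Q'.d (1 : Q'.M) = 1
      simp
  equiv := by
    intro b n
    apply Subtype.ext
    apply Prod.ext
    · exact κ.equiv b n
    · show (1 : Q'.M) = Q'.act 1 1
      simp

/-- The induced morphism into the pullback `T ×_Q Q'` from an object mapping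
trivially to `Q` through the second leg. -/
def pbInR (α : XModHom T Q) (g : XModHom Q' Q) {X : XMod} (u : XModHom X Q')
    (h : XModHom.comp g u = XModHom.triv X Q) : XModHom X (pbXMod α g) where
  f1 :=
    { toFun := fun n => ⟨(1, u.f1 n), by
        show α.f1 1 = g.f1 (u.f1 n)
        have := congrArg XModHom.f1 h
        have h' : g.f1 (u.f1 n) = 1 := DFunLike.congr_fun this n
        rw [h', map_one]⟩
      map_one' := by
        apply Subtype.ext
        apply Prod.ext <;> (try simp) <;> rfl
      map_mul' := by
        intro a b
        apply Subtype.ext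
        show ((1 : T.M), u.f1 (a * b)) = ((1 : T.M), u.f1 a) * ((1 : T.M), u.f1 b)
        simp [Prod.ext_iff, map_mul] }
  f2 :=
    { toFun := fun n => ⟨(1, u.f2 n), by
        show α.f2 1 = g.f2 (u.f2 n)
        have := congrArg XModHom.f2 h
        have h' : g.f2 (u.f2 n) = 1 := DFunLike.congr_fun this n
        rw [h', map_one]⟩
      map_one' := by
        apply Subtype.ext
        apply Prod.ext <;> (try simp) <;> rfl
      map_mul' := by
        intro a b
        apply Subtype.ext
        show ((1 : T.G), u.f2 (a * b)) = ((1 : T.G), u.f2 a) * ((1 : T.G), u.f2 b)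
        simp [Prod.ext_iff, map_mul] }
  comm_d := by
    intro n
    apply Subtype.ext
    apply Prod.ext
    · show T.d (1 : T.M) = 1
      simp
    · exact u.comm_d n
  equiv := by
    intro b n
    apply Subtype.ext
    apply Prod.ext
    · show (1 : T.M) = T.act 1 1
      simp
    · exact u.equiv b n

/-- The morphism of pullbacks `T ×_Q Q' → E ×_Q Q'` induced by `f : T → E`
with `p ∘ f = α`. -/
def pbMapL {E : XMod} (α : XModHom T Q) (p : XModHom E Q) (g : XModHom Q' Q)
    (f : XModHom T E) (hpf : XModHom.comp p f = α) :
    XModHom (pbXMod α g) (pbXMod p g) where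
  f1 :=
    { toFun := fun w => ⟨(f.f1 w.1.1, w.1.2), by
        show p.f1 (f.f1 w.1.1) = g.f1 w.1.2
        have h' : p.f1 (f.f1 w.1.1) = α.f1 w.1.1 :=
          DFunLike.congr_fun (congrArg XModHom.f1 hpf) w.1.1
        rw [h']
        exact w.2⟩
      map_one' := by
        apply Subtype.ext
        apply Prod.ext <;> (try simp) <;> first | rfl | exact map_one f.f1
      map_mul' := by
        intro a b
        apply Subtype.ext
        apply Prod.ext
        · exact map_mul f.f1 a.1.1 b.1.1
        · rfl }
  f2 :=
    { toFun := fun w => ⟨(f.f2 w.1.1, w.1.2), by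
        show p.f2 (f.f2 w.1.1) = g.f2 w.1.2
        have h' : p.f2 (f.f2 w.1.1) = α.f2 w.1.1 :=
          DFunLike.congr_fun (congrArg XModHom.f2 hpf) w.1.1
        rw [h']
        exact w.2⟩
      map_one' := by
        apply Subtype.ext
        apply Prod.ext <;> (try simp) <;> first | rfl | exact map_one f.f2
      map_mul' := by
        intro a b
        apply Subtype.ext
        apply Prod.ext
        · exact map_mul f.f2 a.1.1 b.1.1
        · rfl }
  comm_d := by
    intro w
    apply Subtype.ext
    apply Prod.ext
    · exact f.comm_d _
    · rfl
  equiv := by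
    intro b w
    apply Subtype.ext
    apply Prod.ext
    · exact f.equiv _ _
    · rfl

end PullbackMaps

/-- A commuting square is a pullback square (categorical definition). -/
def IsPullbackSquare {P X Y Z : XMod} (p1 : XModHom P X) (p2 : XModHom P Y)
    (f : XModHom X Z) (h : XModHom Y Z) : Prop :=
  XModHom.comp f p1 = XModHom.comp h p2 ∧
    ∀ (W : XMod) (u : XModHom W X) (v : XModHom W Y),
      XModHom.comp f u = XModHom.comp h v →
        ∃! w : XModHom W P, XModHom.comp p1 w = u ∧ XModHom.comp p2 w = v

namespace LocalizationFunctor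

/-- `L` is admissible for the class of regular epimorphisms: applying `L` to the
pullback of a regular epimorphism `α : LT → LQ` along the coaugmentation
`ℓ^Q : Q → LQ` yields again a pullback square. -/
def Admissible (L : LocalizationFunctor) : Prop :=
  ∀ (T Q : XMod) (α : XModHom (L.obj T) (L.obj Q)), XModHom.RegEpi α →
    IsPullbackSquare (L.map (pbFst α (L.ell Q))) (L.map (pbSnd α (L.ell Q)))
      (L.map α) (L.map (L.ell Q))

/-- `L` is conditionally flat: the pullback of any `L`-flat short exact sequence
along any morphism is again `L`-flat. -/
def ConditionallyFlat (L : LocalizationFunctor) : Prop :=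
  ∀ (N T Q : XMod) (κ : XModHom N T) (α : XModHom T Q) (hse : ShortExact κ α),
    L.LFlat κ α →
      ∀ (Q' : XMod) (g : XModHom Q' Q),
        L.LFlat (pbIn κ α g hse.1.1) (pbSnd α g)

/-- A short exact sequence `1 → N → T → Q → 1` admits a fiberwise localization:
there is a short exact sequence `1 → LN → E → Q → 1` together with an
`L`-equivalence `T → E` compatible with the coaugmentation of `N`. -/
def AdmitsFiberwise (L : LocalizationFunctor) {N T Q : XMod} (κ : XModHom N T)
    (α : XModHom T Q) : Prop :=
  ∃ (E : XMod) (j : XModHom (L.obj N) E) (p : XModHom E Q) (e : XModHom T E),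
    ShortExact j p ∧ XModHom.IsIso (L.map e) ∧
      XModHom.comp e κ = XModHom.comp j (L.ell N) ∧ XModHom.comp p e = α

end LocalizationFunctor
section Kernel

variable {N T : XMod} (f : XModHom N T)

theorem ker_act_mem {b : N.G} (hb : b ∈ f.f2.ker) {n : N.M} (hn : n ∈ f.f1.ker) :
    N.act b n ∈ f.f1.ker := by
  have hb' : f.f2 b = 1 := hb
  have hn' : f.f1 n = 1 := hn
  show f.f1 (N.act b n) = 1
  rw [f.equiv, hb', hn', map_one]

/-- The automorphism of `ker f.f1` induced by an element of `ker f.f2`. -/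
def kerActEquiv (b : ↥f.f2.ker) : ↥f.f1.ker ≃* ↥f.f1.ker where
  toFun n := ⟨N.act b.1 n.1, ker_act_mem f b.2 n.2⟩
  invFun n := ⟨N.act b.1⁻¹ n.1, ker_act_mem f (f.f2.ker.inv_mem b.2) n.2⟩
  left_inv n := Subtype.ext (N.act_inv_act _ _)
  right_inv n := Subtype.ext (N.act_act_inv _ _)
  map_mul' n m := Subtype.ext (map_mul _ _ _)

/-- The kernel of a morphism of crossed modules, computed componentwise. -/
def kerXMod : XMod where
  M := ↥f.f1.ker
  G := ↥f.f2.ker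
  act :=
    { toFun := kerActEquiv f
      map_one' := by
        apply MulEquiv.ext
        intro n
        apply Subtype.ext
        show N.act (1 : ↥f.f2.ker).1 n.1 = n.1
        simp
      map_mul' := by
        intro b c
        apply MulEquiv.ext
        intro n
        apply Subtype.ext
        show N.act (b * c).1 n.1 = N.act b.1 (N.act c.1 n.1)
        simp [map_mul] }
  d :=
    { toFun := fun n => ⟨N.d n.1, by
        have hn : f.f1 n.1 = 1 := n.2
        show f.f2 (N.d n.1) = 1
        rw [← f.comm_d, hn, map_one]⟩
      map_one' := by
        apply Subtype.ext
        simp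
      map_mul' := by
        intro a b
        apply Subtype.ext
        show N.d (a * b).1 = N.d a.1 * N.d b.1
        simp }
  act_d := by
    intro b n
    apply Subtype.ext
    exact N.act_d _ _
  peiffer := by
    intro n m
    apply Subtype.ext
    exact N.peiffer _ _

/-- The inclusion of the kernel. -/
def kerIncl : XModHom (kerXMod f) N where
  f1 := f.f1.ker.subtype
  f2 := f.f2.ker.subtype
  comm_d := fun _ => rfl
  equiv := fun _ _ => rfl

end Kernel

/-- A crossed module is trivial if both underlying groups are trivial. -/
def XMod.IsTrivial (X : XMod) : Prop :=
  (∀ m : X.M, m = 1) ∧ ∀ b : X.G, b = 1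

/-- `X` is `A`-null if the only morphism of crossed modules `A → X` is the
trivial one. -/
def ANull (A X : XMod) : Prop :=
  ∀ φ : XModHom A X, φ = XModHom.triv A X

/-- `X` is `f`-local if precomposition with `f` is a bijection on morphisms
into `X`. -/
def FLocal {B C : XMod} (f : XModHom B C) (X : XMod) : Prop :=
  Function.Bijective fun φ : XModHom C X => XModHom.comp φ f

/-- The subgroup `[N₂, N₁]` of `N₁` generated by the elements `ᵇt·t⁻¹`. -/
def actCommutator (N : XMod) : Subgroup N.M :=
  Subgroup.closure {x | ∃ (b : N.G) (t : N.M), x = N.act b t * t⁻¹}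

section NormalClosure

variable {A W : XMod} (φ : XModHom A W)

/-- The level-2 part of the normal closure of the image of `φ`:
the normal closure of `φ₂(A₂)` in `W₂`. -/
def ncl2 : Subgroup W.G :=
  Subgroup.normalClosure (Set.range φ.f2)

/-- The level-1 part of the normal closure of the image of `φ`:
the subgroup `φ₁(A₁)^{W₂}·[φ₂(A₂)^{W₂}, W₁]` of `W₁`. -/
def ncl1 : Subgroup W.M :=
  Subgroup.closure
    ({x | ∃ (b : W.G) (m : A.M), x = W.act b (φ.f1 m)} ∪
      {x | ∃ s ∈ ncl2 φ, ∃ w : W.M, x = W.act s w * w⁻¹})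

end NormalClosure


/-!
Pulling back along `g` preserves short exact sequences, so the only point is that the induced
map `φ : T ×_Q Q' → E ×_Q Q'` is an `L`-equivalence. It is surjective because `f` is, and its
kernel is `κ(ker ℓ^N) × 1`, which `ℓ` kills by naturality. Hence `ℓ` factors as `u ∘ φ`, and
since `ℓ` is surjective, `L φ` is inverted by `(L ℓ)⁻¹ ∘ L u`.
-/

namespace XModHom

variable {A B C D : XMod}

theorem congr_f1 {f g : XModHom A B} (h : f = g) (x : A.M) : f.f1 x = g.f1 x := h ▸ rfl

theorem congr_f2 {f g : XModHom A B} (h : f = g) (x : A.G) : f.f2 x = g.f2 x := h ▸ rfl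

theorem comp_assoc (h : XModHom C D) (g : XModHom B C) (f : XModHom A B) :
    comp (comp h g) f = comp h (comp g f) := rfl

theorem triv_comp (f : XModHom A B) : comp (triv B C) f = triv A C := rfl

theorem comp_triv (g : XModHom B C) : comp g (triv A B) = triv A C :=
  ext (MonoidHom.ext fun _ => map_one g.f1) (MonoidHom.ext fun _ => map_one g.f2)

theorem comp_kerIncl (f : XModHom A B) : comp f (kerIncl f) = triv (kerXMod f) B :=
  ext (MonoidHom.ext fun x => x.2) (MonoidHom.ext fun x => x.2)

theorem RegEpi.of_comp {g : XModHom B C} {f : XModHom A B} (h : RegEpi (comp g f)) : RegEpi g :=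
  ⟨Function.Surjective.of_comp (g := f.f1) h.1, Function.Surjective.of_comp (g := f.f2) h.2⟩

theorem RegEpi.cancel_right {q : XModHom A B} (hq : RegEpi q) {s t : XModHom B C}
    (h : comp s q = comp t q) : s = t := by
  apply ext
  · ext b
    obtain ⟨a, rfl⟩ := hq.1 b
    exact congr_f1 h a
  · ext b
    obtain ⟨a, rfl⟩ := hq.2 b
    exact congr_f2 h a

theorem RegEpi.exists_comp_eq {q : XModHom A B} (hq : RegEpi q) (r : XModHom A C)
    (h1 : q.f1.ker ≤ r.f1.ker) (h2 : q.f2.ker ≤ r.f2.ker) : ∃ u : XModHom B C, comp u q = r := by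
  set u1 := q.f1.liftOfSurjective hq.1 ⟨r.f1, h1⟩
  set u2 := q.f2.liftOfSurjective hq.2 ⟨r.f2, h2⟩
  have hu1 : ∀ a, u1 (q.f1 a) = r.f1 a := q.f1.liftOfRightInverse_comp_apply _ _ _
  have hu2 : ∀ a, u2 (q.f2 a) = r.f2 a := q.f2.liftOfRightInverse_comp_apply _ _ _
  refine ⟨⟨u1, u2, fun b => ?_, fun b m => ?_⟩, ext (MonoidHom.ext hu1) (MonoidHom.ext hu2)⟩
  · obtain ⟨a, rfl⟩ := hq.1 b
    rw [q.comm_d, hu1, hu2, r.comm_d]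
  · obtain ⟨a, rfl⟩ := hq.2 b
    obtain ⟨n, rfl⟩ := hq.1 m
    rw [← q.equiv, hu1, hu1, hu2, r.equiv]

theorem isIso_of_comp_eq_id {q : XModHom A B} (hq : RegEpi q) {s : XModHom B A}
    (hs : comp s q = id A) : IsIso q :=
  ⟨s, hs, hq.cancel_right (by rw [comp_assoc, hs]; rfl)⟩

theorem IsKernelOf.exists_f1_eq {κ : XModHom A B} {α : XModHom B C} (hk : IsKernelOf κ α)
    {t : B.M} (ht : α.f1 t = 1) : ∃ n, κ.f1 n = t := by
  obtain ⟨v, hv, -⟩ := hk.2 (kerXMod α) (kerIncl α) (comp_kerIncl α)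
  exact ⟨v.f1 ⟨t, ht⟩, congr_f1 hv ⟨t, ht⟩⟩

theorem IsKernelOf.exists_f2_eq {κ : XModHom A B} {α : XModHom B C} (hk : IsKernelOf κ α)
    {t : B.G} (ht : α.f2 t = 1) : ∃ n, κ.f2 n = t := by
  obtain ⟨v, hv, -⟩ := hk.2 (kerXMod α) (kerIncl α) (comp_kerIncl α)
  exact ⟨v.f2 ⟨t, ht⟩, congr_f2 hv ⟨t, ht⟩⟩

end XModHom

open XModHom

namespace LocalizationFunctor

variable (L : LocalizationFunctor) {A B : XMod}

theorem ell_f1_map_eq_one (c : XModHom A B) {n : A.M} (hn : (L.ell A).f1 n = 1) :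
    (L.ell B).f1 (c.f1 n) = 1 :=
  calc (L.ell B).f1 (c.f1 n) = (L.map c).f1 ((L.ell A).f1 n) := congr_f1 (L.natural c) n
    _ = 1 := by rw [hn, map_one]

theorem ell_f2_map_eq_one (c : XModHom A B) {n : A.G} (hn : (L.ell A).f2 n = 1) :
    (L.ell B).f2 (c.f2 n) = 1 :=
  calc (L.ell B).f2 (c.f2 n) = (L.map c).f2 ((L.ell A).f2 n) := congr_f2 (L.natural c) n
    _ = 1 := by rw [hn, map_one]

theorem isIso_map_of_ker_le (hL : L.RegEpiLoc) {q : XModHom A B} (hq : RegEpi q)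
    (h1 : q.f1.ker ≤ (L.ell A).f1.ker) (h2 : q.f2.ker ≤ (L.ell A).f2.ker) :
    IsIso (L.map q) := by
  obtain ⟨u, hu⟩ := hq.exists_comp_eq (L.ell A) h1 h2
  obtain ⟨e, he, -⟩ := L.iso_map_ell A
  have hell : comp (L.map q) u = L.ell B :=
    hq.cancel_right (by rw [comp_assoc, hu, L.natural q])
  refine isIso_of_comp_eq_id (s := comp e (L.map u)) (RegEpi.of_comp (f := u) ?_) ?_
  · rw [hell]; exact hL B
  · rw [comp_assoc, ← L.map_comp, hu, he]

end LocalizationFunctor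

section PullbackLemmas

variable {N N' T E Q Q' : XMod}

theorem comp_pbFst (α : XModHom T Q) (g : XModHom Q' Q) :
    comp α (pbFst α g) = comp g (pbSnd α g) :=
  ext (MonoidHom.ext fun x => x.2) (MonoidHom.ext fun x => x.2)

theorem pbXMod_hom_ext {α : XModHom T Q} {g : XModHom Q' Q} {X : XMod}
    {u v : XModHom X (pbXMod α g)} (h1 : comp (pbFst α g) u = comp (pbFst α g) v)
    (h2 : comp (pbSnd α g) u = comp (pbSnd α g) v) : u = v :=
  ext (MonoidHom.ext fun x => Subtype.ext (Prod.ext (congr_f1 h1 x) (congr_f1 h2 x)))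
    (MonoidHom.ext fun x => Subtype.ext (Prod.ext (congr_f2 h1 x) (congr_f2 h2 x)))

theorem pbFst_comp_pbIn (κ : XModHom N T) (α : XModHom T Q) (g : XModHom Q' Q)
    (h : comp α κ = triv N Q) : comp (pbFst α g) (pbIn κ α g h) = κ := rfl

theorem pbSnd_comp_pbIn (κ : XModHom N T) (α : XModHom T Q) (g : XModHom Q' Q)
    (h : comp α κ = triv N Q) : comp (pbSnd α g) (pbIn κ α g h) = triv N Q' := rfl

theorem XModHom.IsKernelOf.pbIn {κ : XModHom N T} {α : XModHom T Q} (hk : IsKernelOf κ α)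
    (g : XModHom Q' Q) : IsKernelOf (pbIn κ α g hk.1) (pbSnd α g) := by
  refine ⟨pbSnd_comp_pbIn κ α g hk.1, fun X w hw => ?_⟩
  obtain ⟨v, hv, hv_uniq⟩ := hk.2 X (comp (pbFst α g) w)
    (by rw [← comp_assoc, comp_pbFst, comp_assoc, hw, comp_triv])
  refine ⟨v, pbXMod_hom_ext ?_ ?_, fun v' hv' => hv_uniq v' ?_⟩
  · rw [← comp_assoc, pbFst_comp_pbIn, hv]
  · rw [← comp_assoc, pbSnd_comp_pbIn, triv_comp, hw]
  · rw [← hv', ← comp_assoc, pbFst_comp_pbIn]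

theorem XModHom.RegEpi.pbSnd {α : XModHom T Q} (hα : RegEpi α) (g : XModHom Q' Q) :
    RegEpi (pbSnd α g) := by
  refine ⟨fun q => ?_, fun q => ?_⟩
  · obtain ⟨t, ht⟩ := hα.1 (g.f1 q)
    exact ⟨⟨(t, q), ht⟩, rfl⟩
  · obtain ⟨t, ht⟩ := hα.2 (g.f2 q)
    exact ⟨⟨(t, q), ht⟩, rfl⟩

theorem ShortExact.pullback {κ : XModHom N T} {α : XModHom T Q} (h : ShortExact κ α)
    (g : XModHom Q' Q) : ShortExact (pbIn κ α g h.1.1) (pbSnd α g) :=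
  ⟨h.1.pbIn g, h.2.pbSnd g⟩

variable {α : XModHom T Q} {p : XModHom E Q} {f : XModHom T E} (hpf : comp p f = α)
  (g : XModHom Q' Q)

theorem XModHom.RegEpi.pbMapL (hf : RegEpi f) : RegEpi (pbMapL α p g f hpf) := by
  refine ⟨?_, ?_⟩
  · rintro ⟨⟨e, q⟩, he⟩
    obtain ⟨t, rfl⟩ := hf.1 e
    exact ⟨⟨(t, q), (congr_f1 hpf t).symm.trans he⟩, rfl⟩
  · rintro ⟨⟨e, q⟩, he⟩
    obtain ⟨t, rfl⟩ := hf.2 e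
    exact ⟨⟨(t, q), (congr_f2 hpf t).symm.trans he⟩, rfl⟩

theorem pbSnd_comp_pbMapL : comp (pbSnd p g) (pbMapL α p g f hpf) = pbSnd α g := rfl

theorem pbMapL_comp_pbIn {κ : XModHom N T} {j : XModHom N' E} {c : XModHom N N'}
    (hκ : comp α κ = triv N Q) (hj : comp p j = triv N' Q) (hc : comp f κ = comp j c) :
    comp (pbMapL α p g f hpf) (pbIn κ α g hκ) = comp (pbIn j p g hj) c :=
  pbXMod_hom_ext hc rfl

theorem ker_pbMapL_f1_le (L : LocalizationFunctor) {κ : XModHom N T}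
    (hker : IsKernelOf (comp κ (kerIncl (L.ell N))) f) (hκ : comp α κ = triv N Q) :
    (pbMapL α p g f hpf).f1.ker ≤ (L.ell (pbXMod α g)).f1.ker := by
  intro a ha
  obtain ⟨hfa, hqa⟩ : f.f1 a.1.1 = 1 ∧ a.1.2 = 1 := Prod.mk_eq_one.mp (congrArg Subtype.val ha)
  obtain ⟨n, hn⟩ := hker.exists_f1_eq hfa
  have ha_eq : a = (pbIn κ α g hκ).f1 n.1 := Subtype.ext (Prod.ext hn.symm hqa)
  rw [MonoidHom.mem_ker, ha_eq]
  exact L.ell_f1_map_eq_one _ n.2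

theorem ker_pbMapL_f2_le (L : LocalizationFunctor) {κ : XModHom N T}
    (hker : IsKernelOf (comp κ (kerIncl (L.ell N))) f) (hκ : comp α κ = triv N Q) :
    (pbMapL α p g f hpf).f2.ker ≤ (L.ell (pbXMod α g)).f2.ker := by
  intro a ha
  obtain ⟨hfa, hqa⟩ : f.f2 a.1.1 = 1 ∧ a.1.2 = 1 := Prod.mk_eq_one.mp (congrArg Subtype.val ha)
  obtain ⟨n, hn⟩ := hker.exists_f2_eq hfa
  have ha_eq : a = (pbIn κ α g hκ).f2 n.1 := Subtype.ext (Prod.ext hn.symm hqa)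
  rw [MonoidHom.mem_ker, ha_eq]
  exact L.ell_f2_map_eq_one _ n.2

end PullbackLemmas

theorem pullback_of_fiberwise_is_fiberwise_of_pullback_general
    (L : LocalizationFunctor) (hL : L.RegEpiLoc)
    {N T Q : XMod} (κ : XModHom N T) (α : XModHom T Q)
    (hse : ShortExact κ α)
    (E : XMod) (j : XModHom (L.obj N) E) (p : XModHom E Q) (f : XModHom T E)
    (hjp : ShortExact j p)
    (hsq1 : XModHom.comp f κ = XModHom.comp j (L.ell N))
    (hsq2 : XModHom.comp p f = α)
    (hfreg : XModHom.RegEpi f)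
    (hker : XModHom.IsKernelOf (XModHom.comp κ (kerIncl (L.ell N))) f)
    {Q' : XMod} (g : XModHom Q' Q) :
    ShortExact (pbIn j p g hjp.1.1) (pbSnd p g) ∧
    XModHom.IsIso (L.map (pbMapL α p g f hsq2)) ∧
    XModHom.comp (pbMapL α p g f hsq2) (pbIn κ α g hse.1.1) =
      XModHom.comp (pbIn j p g hjp.1.1) (L.ell N) ∧
    XModHom.comp (pbSnd p g) (pbMapL α p g f hsq2) = pbSnd α g :=
  ⟨hjp.pullback g,
    L.isIso_map_of_ker_le hL (hfreg.pbMapL hsq2 g) (ker_pbMapL_f1_le hsq2 g L hker hse.1.1)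
      (ker_pbMapL_f2_le hsq2 g L hker hse.1.1),
    pbMapL_comp_pbIn hsq2 g hse.1.1 hjp.1.1 hsq1,
    pbSnd_comp_pbMapL hsq2 g⟩

/-- Let `L` be a regular-epi localization functor and let
`1 → N →(κ) T →(α) Q → 1` be an `L`-flat short exact sequence, with fiberwise
localization the quotient sequence `1 → LN →(j) E →(p) Q → 1` obtained by
quotienting `T` by the normal subcrossed module `κ(ker ℓ^N)` (here `E` is
presented as such a quotient by the regular epimorphism `f : T → E` whose
kernel is `κ(ker ℓ^N)`).  Then for any morphism `g : Q' → Q`, the pullback of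
this fiberwise localization along `g`, together with the induced morphism
`T ×_Q Q' → E ×_Q Q'`, is a fiberwise localization of the pullback sequence
`1 → N → T ×_Q Q' → Q' → 1`. -/
theorem pullback_of_fiberwise_is_fiberwise_of_pullback
    (L : LocalizationFunctor) (hL : L.RegEpiLoc)
    {N T Q : XMod} (κ : XModHom N T) (α : XModHom T Q)
    (hse : ShortExact κ α) (hflat : L.LFlat κ α)
    (E : XMod) (j : XModHom (L.obj N) E) (p : XModHom E Q) (f : XModHom T E)
    (hjp : ShortExact j p)
    (hfequiv : XModHom.IsIso (L.map f))
    (hsq1 : XModHom.comp f κ = XModHom.comp j (L.ell N))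
    (hsq2 : XModHom.comp p f = α)
    (hfreg : XModHom.RegEpi f)
    (hker : XModHom.IsKernelOf (XModHom.comp κ (kerIncl (L.ell N))) f)
    {Q' : XMod} (g : XModHom Q' Q) :
    ShortExact (pbIn j p g hjp.1.1) (pbSnd p g) ∧
    XModHom.IsIso (L.map (pbMapL α p g f hsq2)) ∧
    XModHom.comp (pbMapL α p g f hsq2) (pbIn κ α g hse.1.1) =
      XModHom.comp (pbIn j p g hjp.1.1) (L.ell N) ∧
    XModHom.comp (pbSnd p g) (pbMapL α p g f hsq2) = pbSnd α g :=
  pullback_of_fiberwise_is_fiberwise_of_pullback_general L hL κ α hse E j p f hjp hsq1 hsq2 hfreg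
    hker g
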